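/- arXiv:1406.7702 — 7 statements merged into one kernel-verified Lean document; each statement's English description precedes it below -/
import Mathlib

section
/- Let L be a complete residuated lattice, M a nonempty set, and let ≈ and ≼ be binary L-relations on M such that: ≈ is reflexive and separated (a ≈ b = 1 iff a = b), symmetric (a ≈ b = b ≈ a), and ⊗-transitive ((a ≈ b) ⊗ (b ≈ c) ≤ a ≈ c); and ≼ is reflexive (a ≼ a = 1), antisymmetric with respect to ≈ ((a ≼ b) ⊓ (b ≼ a) ≤ a ≈ b), and ⊗-transitive ((a ≼ b) ⊗ (b ≼ c) ≤ a ≼ c). Then the following conditions are equivalent: (i) (a₁ ≈ b₁) ⊗ (a₂ ≈ b₂) ⊗ (a₁ ≼ a₂) ≤ b₁ ≼ b₂ for all a₁,a₂,b₁,b₂ ∈ M; (ii) a ≈ b ≤ a ≼ b for all a,b ∈ M; (iii) a ≈ b = (a ≼ b) ⊓ (b ≼ a) for all a,b ∈ M; (iv) ≈ is the symmetric interior of ≼, i.e., ≈ is symmetric, a ≈ b ≤ a ≼ b for all a,b, and every symmetric binary L-relation R on M with R(a,b) ≤ a ≼ b for all a,b satisfies R(a,b) ≤ a ≈ b for all a,b.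 -/
/-- A complete (integral commutative) residuated lattice: a complete lattice
with a commutative monoid operation `otimes` whose unit is the top element,
together with a residuum `rimp` satisfying the adjointness property. -/
class CompleteResiduatedLattice (L : Type*) extends CompleteLattice L where
  otimes : L → L → L
  rimp : L → L → L
  otimes_comm : ∀ a b : L, otimes a b = otimes b a
  otimes_assoc : ∀ a b c : L, otimes (otimes a b) c = otimes a (otimes b c)
  otimes_top : ∀ a : L, otimes a ⊤ = a
  adjoint : ∀ a b c : L, otimes a b ≤ c ↔ a ≤ rimp b c

open CompleteResiduatedLattice

local infixr:70 " ⊛ " => CompleteResiduatedLattice.otimes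

namespace CompleteResiduatedLattice

variable {L : Type*} [CompleteResiduatedLattice L]

theorem otimes_mono_left {a b : L} (c : L) (h : a ≤ b) : a ⊛ c ≤ b ⊛ c :=
  (adjoint a c (b ⊛ c)).mpr (h.trans ((adjoint b c (b ⊛ c)).mp le_rfl))

theorem otimes_mono {a b c d : L} (hab : a ≤ b) (hcd : c ≤ d) : a ⊛ c ≤ b ⊛ d :=
  calc a ⊛ c ≤ b ⊛ c := otimes_mono_left c hab
    _ = c ⊛ b := otimes_comm b c
    _ ≤ d ⊛ b := otimes_mono_left b hcd
    _ = b ⊛ d := otimes_comm d b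

theorem top_otimes (a : L) : ⊤ ⊛ a = a := by
  rw [otimes_comm, otimes_top]

end CompleteResiduatedLattice

section LRelation

variable {L : Type*} [CompleteResiduatedLattice L] {M : Type*} {eq le : M → M → L}

theorem eq_self_of_le_refl (hle_refl : ∀ a, le a a = ⊤)
    (hle_antisymm : ∀ a b, le a b ⊓ le b a ≤ eq a b) (a : M) : eq a a = ⊤ :=
  top_le_iff.mp (by simpa only [hle_refl, inf_idem] using hle_antisymm a a)

theorem eq_le_of_compatible (heq_self : ∀ a, eq a a = ⊤) (hle_refl : ∀ a, le a a = ⊤)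
    (hcomp : ∀ a₁ a₂ b₁ b₂, eq a₁ b₁ ⊛ eq a₂ b₂ ⊛ le a₁ a₂ ≤ le b₁ b₂) (a b : M) :
    eq a b ≤ le a b := by
  simpa only [heq_self, hle_refl, otimes_top, top_otimes] using hcomp a a a b

theorem compatible_of_eq_le (heq_symm : ∀ a b, eq a b = eq b a)
    (hle_trans : ∀ a b c, le a b ⊛ le b c ≤ le a c) (h : ∀ a b, eq a b ≤ le a b)
    (a₁ a₂ b₁ b₂ : M) : eq a₁ b₁ ⊛ eq a₂ b₂ ⊛ le a₁ a₂ ≤ le b₁ b₂ :=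
  calc eq a₁ b₁ ⊛ eq a₂ b₂ ⊛ le a₁ a₂ ≤ le b₁ a₁ ⊛ le a₂ b₂ ⊛ le a₁ a₂ :=
        otimes_mono ((heq_symm a₁ b₁).trans_le (h b₁ a₁)) (otimes_mono_left _ (h a₂ b₂))
    _ ≤ le b₁ a₁ ⊛ le a₁ b₂ :=
        otimes_mono le_rfl ((otimes_comm _ _).trans_le (hle_trans a₁ a₂ b₂))
    _ ≤ le b₁ b₂ := hle_trans b₁ a₁ b₂

theorem eq_eq_inf_of_eq_le (heq_symm : ∀ a b, eq a b = eq b a)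
    (hle_antisymm : ∀ a b, le a b ⊓ le b a ≤ eq a b) (h : ∀ a b, eq a b ≤ le a b) (a b : M) :
    eq a b = le a b ⊓ le b a :=
  le_antisymm (le_inf (h a b) ((heq_symm a b).trans_le (h b a))) (hle_antisymm a b)

theorem le_eq_of_symm_of_le_of_eq_eq_inf (h : ∀ a b, eq a b = le a b ⊓ le b a)
    {R : M → M → L} (hR_symm : ∀ a b, R a b = R b a) (hR_le : ∀ a b, R a b ≤ le a b) (a b : M) :
    R a b ≤ eq a b :=
  (h a b).symm ▸ le_inf (hR_le a b) ((hR_symm a b).trans_le (hR_le b a))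

end LRelation

theorem stmt0_general {L : Type*} [CompleteResiduatedLattice L] {M : Type*}
    (eq le : M → M → L)
    (heq_symm : ∀ a b : M, eq a b = eq b a)
    (hle_refl : ∀ a : M, le a a = ⊤)
    (hle_antisymm : ∀ a b : M, le a b ⊓ le b a ≤ eq a b)
    (hle_trans : ∀ a b c : M, le a b ⊛ le b c ≤ le a c) :
    List.TFAE
      [ ∀ a₁ a₂ b₁ b₂ : M, eq a₁ b₁ ⊛ eq a₂ b₂ ⊛ le a₁ a₂ ≤ le b₁ b₂,
        ∀ a b : M, eq a b ≤ le a b,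
        ∀ a b : M, eq a b = le a b ⊓ le b a,
        (∀ a b : M, eq a b = eq b a) ∧ (∀ a b : M, eq a b ≤ le a b) ∧
          (∀ R : M → M → L, (∀ a b, R a b = R b a) → (∀ a b, R a b ≤ le a b) →
            ∀ a b, R a b ≤ eq a b) ] := by
  tfae_have 1 → 2 := eq_le_of_compatible (eq_self_of_le_refl hle_refl hle_antisymm) hle_refl
  tfae_have 2 → 1 := compatible_of_eq_le heq_symm hle_trans
  tfae_have 2 → 3 := eq_eq_inf_of_eq_le heq_symm hle_antisymm
  tfae_have 3 → 4 := fun h =>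
    ⟨heq_symm, fun a b => (h a b).trans_le inf_le_left,
      fun _ hR_symm hR_le => le_eq_of_symm_of_le_of_eq_eq_inf h hR_symm hR_le⟩
  tfae_have 4 → 2 := fun h => h.2.1
  tfae_finish

/-- Theorem 1 (equivalent characterizations of the fuzzy equality induced by
a fuzzy order). -/
theorem stmt0 {L : Type*} [CompleteResiduatedLattice L] {M : Type*} [Nonempty M]
    (eq le : M → M → L)
    (heq_refl : ∀ a b : M, eq a b = ⊤ ↔ a = b)
    (heq_symm : ∀ a b : M, eq a b = eq b a)
    (heq_trans : ∀ a b c : M, eq a b ⊛ eq b c ≤ eq a c)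
    (hle_refl : ∀ a : M, le a a = ⊤)
    (hle_antisymm : ∀ a b : M, le a b ⊓ le b a ≤ eq a b)
    (hle_trans : ∀ a b c : M, le a b ⊛ le b c ≤ le a c) :
    List.TFAE
      [ ∀ a₁ a₂ b₁ b₂ : M, eq a₁ b₁ ⊛ eq a₂ b₂ ⊛ le a₁ a₂ ≤ le b₁ b₂,
        ∀ a b : M, eq a b ≤ le a b,
        ∀ a b : M, eq a b = le a b ⊓ le b a,
        (∀ a b : M, eq a b = eq b a) ∧ (∀ a b : M, eq a b ≤ le a b) ∧
          (∀ R : M → M → L, (∀ a b, R a b = R b a) → (∀ a b, R a b ≤ le a b) →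
            ∀ a b, R a b ≤ eq a b) ] :=
  stmt0_general eq le heq_symm hle_refl hle_antisymm hle_trans
end

section
/- Let L be a complete residuated lattice and Y a nonempty set. For L-sets A,B,M : Y → L let S(A,M) = ⨅_{y∈Y} (A(y) → M(y)), let ||A ⇒ B||_M = S(A,M) → S(B,M), and let A ⊔ B be the pointwise join. Let T be a map assigning to each pair (A,B) of L-sets a degree T(A ⇒ B) ∈ L, let Mod(T) = {M : Y → L | T(A ⇒ B) ≤ ||A ⇒ B||_M for all A,B}, and let ||A ⇒ B||_T = ⨅_{M ∈ Mod(T)} ||A ⇒ B||_M. Then for all A,B,C,D : Y → L, ||A ⇒ B||_T ⊗ ||C ⇒ D||_T ≤ ||A ⊔ C ⇒ B ⊔ D||_T. -/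
open CompleteResiduatedLattice

local infixr:70 " ⊛ " => CompleteResiduatedLattice.otimes

variable {L : Type*} [CompleteResiduatedLattice L] {Y : Type*}

/-- The degree `S(A,M)` to which the L-set `A` is included in the L-set `M`. -/
def Ssub (A M : Y → L) : L := ⨅ y, rimp (A y) (M y)

/-- The degree `||A ⇒ B||_M` to which the fuzzy attribute implication
`A ⇒ B` is true in the L-set `M`. -/
def faiDeg (A B M : Y → L) : L := rimp (Ssub A M) (Ssub B M)

/-- The set `Mod(T)` of all models of an L-set `T` of fuzzy attribute
implications. -/
def faiMod (T : (Y → L) → (Y → L) → L) : Set (Y → L) :=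
  {M | ∀ A B, T A B ≤ faiDeg A B M}

/-- The degree `||A ⇒ B||_T` to which `A ⇒ B` is semantically entailed
by `T`. -/
def faiDegT (T : (Y → L) → (Y → L) → L) (A B : Y → L) : L :=
  ⨅ M ∈ faiMod T, faiDeg A B M

namespace CompleteResiduatedLattice

variable {a b c d : L}

theorem otimes_le_otimes_right (h : a ≤ b) (c : L) : a ⊛ c ≤ b ⊛ c :=
  (adjoint _ _ _).mpr (h.trans ((adjoint _ _ _).mp le_rfl))

theorem otimes_le_otimes (hab : a ≤ b) (hcd : c ≤ d) : a ⊛ c ≤ b ⊛ d :=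
  calc a ⊛ c ≤ b ⊛ c := otimes_le_otimes_right hab c
    _ = c ⊛ b := otimes_comm b c
    _ ≤ d ⊛ b := otimes_le_otimes_right hcd b
    _ = b ⊛ d := otimes_comm d b

theorem otimes_le_left (a b : L) : a ⊛ b ≤ a :=
  calc a ⊛ b ≤ a ⊛ ⊤ := otimes_le_otimes le_rfl le_top
    _ = a := otimes_top a

theorem otimes_le_right (a b : L) : a ⊛ b ≤ b :=
  otimes_comm a b ▸ otimes_le_left b a

theorem rimp_otimes_le (a b : L) : rimp a b ⊛ a ≤ b :=
  (adjoint _ _ _).mpr le_rfl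

theorem sup_rimp (a b c : L) : rimp (a ⊔ b) c = rimp a c ⊓ rimp b c := by
  refine eq_of_forall_le_iff fun x => ?_
  rw [le_inf_iff, ← adjoint, ← adjoint, ← adjoint, otimes_comm x (a ⊔ b), otimes_comm x a,
    otimes_comm x b, adjoint, adjoint, adjoint, sup_le_iff]

theorem otimes_rimp_le_rimp_inf (a b c d : L) :
    rimp a b ⊛ rimp c d ≤ rimp (a ⊓ c) (b ⊓ d) := by
  rw [← adjoint]
  apply le_inf
  · calc (rimp a b ⊛ rimp c d) ⊛ (a ⊓ c) ≤ rimp a b ⊛ a :=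
        otimes_le_otimes (otimes_le_left _ _) inf_le_left
      _ ≤ b := rimp_otimes_le a b
  · calc (rimp a b ⊛ rimp c d) ⊛ (a ⊓ c) ≤ rimp c d ⊛ c :=
        otimes_le_otimes (otimes_le_right _ _) inf_le_right
      _ ≤ d := rimp_otimes_le c d

end CompleteResiduatedLattice

theorem Ssub_sup (A C M : Y → L) :
    Ssub (fun y => A y ⊔ C y) M = Ssub A M ⊓ Ssub C M := by
  simp only [Ssub, sup_rimp, iInf_inf_eq]

theorem faiDeg_otimes_le_faiDeg_sup (A B C D M : Y → L) :
    faiDeg A B M ⊛ faiDeg C D M ≤ faiDeg (fun y => A y ⊔ C y) (fun y => B y ⊔ D y) M := by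
  rw [faiDeg, faiDeg, faiDeg, Ssub_sup, Ssub_sup]
  exact otimes_rimp_le_rimp_inf _ _ _ _

theorem stmt4_general {L : Type*} [CompleteResiduatedLattice L] {Y : Type*}
    (T : (Y → L) → (Y → L) → L) (A B C D : Y → L) :
    faiDegT T A B ⊛ faiDegT T C D ≤
      faiDegT T (fun y => A y ⊔ C y) (fun y => B y ⊔ D y) :=
  le_iInf₂ fun M hM =>
    calc faiDegT T A B ⊛ faiDegT T C D ≤ faiDeg A B M ⊛ faiDeg C D M :=
          otimes_le_otimes (biInf_le _ hM) (biInf_le _ hM)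
      _ ≤ _ := faiDeg_otimes_le_faiDeg_sup A B C D M

/-- Semantic entailment of fuzzy attribute implications is compatible with
pointwise joins: `||A ⇒ B||_T ⊗ ||C ⇒ D||_T ≤ ||A ⊔ C ⇒ B ⊔ D||_T`. -/
theorem stmt4 {L : Type*} [CompleteResiduatedLattice L] {Y : Type*} [Nonempty Y]
    (T : (Y → L) → (Y → L) → L) (A B C D : Y → L) :
    faiDegT T A B ⊛ faiDegT T C D ≤
      faiDegT T (fun y => A y ⊔ C y) (fun y => B y ⊔ D y) :=
  stmt4_general T A B C D
end

section
/- Let L be a complete residuated lattice and Y a nonempty set. For L-sets A,B,M : Y → L let S(A,M) = ⨅_{y∈Y} (A(y) → M(y)) and ||A ⇒ B||_M = S(A,M) → S(B,M). Let T be a map assigning to each pair (A,B) of L-sets a degree T(A ⇒ B) ∈ L, let Mod(T) = {M : Y → L | T(A ⇒ B) ≤ ||A ⇒ B||_M for all A,B}, and ||A ⇒ B||_T = ⨅_{M ∈ Mod(T)} ||A ⇒ B||_M. If A,A',B,B' : Y → L satisfy ||A ⇒ A'||_T = ||A' ⇒ A||_T = 1 and ||B ⇒ B'||_T = ||B' ⇒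 B||_T = 1, then ||A ⇒ B||_T = ||A' ⇒ B'||_T. (Hence the L-order on the quotient algebra 𝔐_T, defined on classes of T-equivalent L-sets by [A] ≼ [B] = ||A ⇒ B||_T, is well defined.) -/
open CompleteResiduatedLattice

local infixr:70 " ⊛ " => CompleteResiduatedLattice.otimes

variable {L : Type*} [CompleteResiduatedLattice L] {Y : Type*}

theorem CompleteResiduatedLattice.rimp_eq_top_iff {a b : L} : rimp a b = ⊤ ↔ a ≤ b := by
  rw [← top_le_iff, ← adjoint, otimes_comm, otimes_top]

theorem faiDegT_eq_top_iff {T : (Y → L) → (Y → L) → L} {C D : Y → L} :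
    faiDegT T C D = ⊤ ↔ ∀ M ∈ faiMod T, Ssub C M ≤ Ssub D M := by
  simp only [faiDegT, faiDeg, iInf₂_eq_top, rimp_eq_top_iff]

theorem Ssub_eq_of_faiDegT_eq_top {T : (Y → L) → (Y → L) → L} {C D M : Y → L}
    (hCD : faiDegT T C D = ⊤) (hDC : faiDegT T D C = ⊤) (hM : M ∈ faiMod T) :
    Ssub C M = Ssub D M :=
  le_antisymm (faiDegT_eq_top_iff.1 hCD M hM) (faiDegT_eq_top_iff.1 hDC M hM)

theorem stmt5_general {L : Type*} [CompleteResiduatedLattice L] {Y : Type*}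
    (T : (Y → L) → (Y → L) → L) (A A' B B' : Y → L)
    (hA : faiDegT T A A' = ⊤) (hA' : faiDegT T A' A = ⊤)
    (hB : faiDegT T B B' = ⊤) (hB' : faiDegT T B' B = ⊤) :
    faiDegT T A B = faiDegT T A' B' :=
  iInf_congr fun M => iInf_congr fun hM => by
    rw [faiDeg, faiDeg, Ssub_eq_of_faiDegT_eq_top hA hA' hM,
      Ssub_eq_of_faiDegT_eq_top hB hB' hM]

/-- Semantic entailment degrees are invariant under replacing `A`, `B` by
`T`-equivalent L-sets; hence the L-order `[A] ≼ [B] = ||A ⇒ B||_T` on the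
quotient algebra `𝔐_T` is well defined. -/
theorem stmt5 {L : Type*} [CompleteResiduatedLattice L] {Y : Type*} [Nonempty Y]
    (T : (Y → L) → (Y → L) → L) (A A' B B' : Y → L)
    (hA : faiDegT T A A' = ⊤) (hA' : faiDegT T A' A = ⊤)
    (hB : faiDegT T B B' = ⊤) (hB' : faiDegT T B' B = ⊤) :
    faiDegT T A B = faiDegT T A' B' :=
  stmt5_general T A A' B B' hA hA' hB hB'
end

section
/- Let L be a complete residuated lattice, 𝓛 a first-order language of function symbols, and let M, N be algebras with L-order (𝓛-structures with reflexive, ⊗-transitive, function-compatible, separated binary L-relations ≼^M, ≼^N). Let h : M → N be a homomorphism (commuting with all function symbols and satisfying a ≼^M b ≤ h(a) ≼^N h(b)), and let Q_h(a,b) = h(a) ≼^N h(b). Consider the factor algebra M/Q_h (quotient by the equivalence a ∼ b iff Q_h(a,b) = Q_h(b,a) = 1, with functions induced componentwise and [a] ≼^{M/Q_h} [b] = Q_h(a,b)), and let h_{Q_h} : M → M/Q_h be the natural map a ↦ [a]. Then the map g : M/Q_h → N given by g([a]) = h(a) is well defined, commutes with the interpretations of all function symbols, satisfies [a] ≼^{M/Q_h}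 [b] = g([a]) ≼^N g([b]) (i.e., g is an embedding), and h = g ∘ h_{Q_h}. Moreover, if h is surjective then g is bijective. -/
/-!
Because `≼^N` is reflexive and separated, `Q_h(a, b) = Q_h(b, a) = 1` holds exactly when
`h a = h b`. Hence `M/Q_h` is the quotient of `M` by the kernel of `h`, the induced map `g` is
injective, and it is surjective whenever `h` is; the remaining identities hold by construction.
-/

open FirstOrder FirstOrder.Language FirstOrder.Language.Structure

open CompleteResiduatedLattice

local infixr:70 " ⊛ " => CompleteResiduatedLattice.otimes

/-- The `⊗`-product `g 0 ⊗ g 1 ⊗ ⋯ ⊗ g (n-1)` of a finite tuple of degrees. -/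
def bigMul {L : Type*} [CompleteResiduatedLattice L] : {n : ℕ} → (Fin n → L) → L
  | 0, _ => ⊤
  | _ + 1, g => CompleteResiduatedLattice.otimes (g 0) (bigMul fun i => g i.succ)

theorem Quot.lift_injective_of_rel {α β : Type*} {r : α → α → Prop} {f : α → β}
    (hf : ∀ a b, r a b → f a = f b) (hr : ∀ a b, f a = f b → r a b) :
    Function.Injective (Quot.lift f hf) := by
  rintro ⟨a⟩ ⟨b⟩ hab
  exact Quot.sound (hr a b hab)

theorem le_eq_top_and_le_eq_top_iff_eq {N L : Type*} [Top L] {le : N → N → L}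
    (hrefl : ∀ a, le a a = ⊤) (hsep : ∀ a b, a ≠ b → le a b ≠ ⊤ ∨ le b a ≠ ⊤) (a b : N) :
    le a b = ⊤ ∧ le b a = ⊤ ↔ a = b := by
  refine ⟨fun ⟨hab, hba⟩ => ?_, fun hab => hab ▸ ⟨hrefl a, hrefl a⟩⟩
  by_contra hne
  exact (hsep a b hne).elim (· hab) (· hba)

theorem stmt12_general {L : Type*} [CompleteResiduatedLattice L]
    (𝓛 : Language) (M N : Type*) [𝓛.Structure M] [𝓛.Structure N]
    (leN : N → N → L)
    (hreflN : ∀ a : N, leN a a = ⊤)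
    (hsepN : ∀ a b : N, a ≠ b → leN a b ≠ ⊤ ∨ leN b a ≠ ⊤)
    (h : M → N)
    (hhom : ∀ (n : ℕ) (f : 𝓛.Functions n) (a : Fin n → M),
      h (funMap f a) = funMap f (fun i => h (a i))) :
    let Qh : M → M → L := fun a b => leN (h a) (h b)
    let r : M → M → Prop := fun a b => Qh a b = ⊤ ∧ Qh b a = ⊤
    ∃ g : Quot r → N,
      (∀ a : M, g (Quot.mk r a) = h a) ∧
      (∀ (n : ℕ) (f : 𝓛.Functions n) (a : Fin n → M),
        g (Quot.mk r (funMap f a)) = funMap f (fun i => g (Quot.mk r (a i)))) ∧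
      (∀ a b : M, Qh a b = leN (g (Quot.mk r a)) (g (Quot.mk r b))) ∧
      (Function.Surjective h → Function.Bijective g) := by
  intro Qh r
  have hr (a b : M) : r a b ↔ h a = h b :=
    le_eq_top_and_le_eq_top_iff_eq hreflN hsepN (h a) (h b)
  have hlift (a b : M) (hab : r a b) : h a = h b := (hr a b).1 hab
  refine ⟨Quot.lift h hlift, fun _ => rfl, hhom, fun _ _ => rfl, fun hsurj => ⟨?_, ?_⟩⟩
  · exact Quot.lift_injective_of_rel hlift fun a b => (hr a b).2
  · exact (Quot.surjective_lift hlift).2 hsurj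

/-- Factorization of a homomorphism `h : M → N` through the factor algebra
`M/Q_h`: the map `g([a]) = h(a)` is a well-defined embedding with
`h = g ∘ h_{Q_h}`, and it is bijective whenever `h` is surjective. -/
theorem stmt12 {L : Type*} [CompleteResiduatedLattice L]
    (𝓛 : Language) (M N : Type*) [𝓛.Structure M] [𝓛.Structure N]
    (leM : M → M → L) (leN : N → N → L)
    (hreflM : ∀ a : M, leM a a = ⊤)
    (htransM : ∀ a b c : M, leM a b ⊛ leM b c ≤ leM a c)
    (hcompM : ∀ (n : ℕ) (f : 𝓛.Functions n) (a b : Fin n → M),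
      bigMul (fun i => leM (a i) (b i)) ≤ leM (funMap f a) (funMap f b))
    (hsepM : ∀ a b : M, a ≠ b → leM a b ≠ ⊤ ∨ leM b a ≠ ⊤)
    (hreflN : ∀ a : N, leN a a = ⊤)
    (htransN : ∀ a b c : N, leN a b ⊛ leN b c ≤ leN a c)
    (hcompN : ∀ (n : ℕ) (f : 𝓛.Functions n) (a b : Fin n → N),
      bigMul (fun i => leN (a i) (b i)) ≤ leN (funMap f a) (funMap f b))
    (hsepN : ∀ a b : N, a ≠ b → leN a b ≠ ⊤ ∨ leN b a ≠ ⊤)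
    (h : M → N)
    (hhom : ∀ (n : ℕ) (f : 𝓛.Functions n) (a : Fin n → M),
      h (funMap f a) = funMap f (fun i => h (a i)))
    (hmono : ∀ a b : M, leM a b ≤ leN (h a) (h b)) :
    let Qh : M → M → L := fun a b => leN (h a) (h b)
    let r : M → M → Prop := fun a b => Qh a b = ⊤ ∧ Qh b a = ⊤
    ∃ g : Quot r → N,
      (∀ a : M, g (Quot.mk r a) = h a) ∧
      (∀ (n : ℕ) (f : 𝓛.Functions n) (a : Fin n → M),
        g (Quot.mk r (funMap f a)) = funMap f (fun i => g (Quot.mk r (a i)))) ∧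
      (∀ a b : M, Qh a b = leN (g (Quot.mk r a)) (g (Quot.mk r b))) ∧
      (Function.Surjective h → Function.Bijective g) :=
  stmt12_general 𝓛 M N leN hreflN hsepN h hhom
end

section
/- Let L be a complete residuated lattice, 𝓛 a first-order language of function symbols, X a set of variables, and Σ an L-set of inequalities, i.e., a map assigning a degree Σ(t ≼ t') ∈ L to each pair of 𝓛-terms t,t' in variables X. Let M and N be algebras with L-order and let h : M → N be a surjective homomorphism (h commutes with the interpretations of all function symbols and a ≼^M b ≤ h(a) ≼^N h(b) for all a,b ∈ M). If M is a model of Σ, i.e., Σ(t ≼ t') ≤ ⨅_{v : X → M} (t.realize v ≼^M t'.realize v) for all terms t,t', then N is a model of Σ: Σ(t ≼ t') ≤ ⨅_{v : X → N} (t.realize v ≼^N t'.realize v) for all terms t,t'. -/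
open FirstOrder FirstOrder.Language FirstOrder.Language.Structure

open CompleteResiduatedLattice

local infixr:70 " ⊛ " => CompleteResiduatedLattice.otimes

/-! By surjectivity every valuation in `N` has the form `h ∘ u` with `u : X → M`. Since `h` commutes
with term evaluation and does not decrease degrees, the degree of `t ≼ t'` at `h ∘ u` in `N` is at
least its degree at `u` in `M`, which is at least `Σ(t ≼ t')`. -/

-- `HomClass.realize_term` would also demand that `h` preserve the relation symbols of `𝓛`.
theorem FirstOrder.Language.Term.realize_comp_of_map_funMap {𝓛 : Language} {X M N : Type*}
    [𝓛.Structure M] [𝓛.Structure N] {h : M → N}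
    (hhom : ∀ (n : ℕ) (f : 𝓛.Functions n) (a : Fin n → M),
      h (funMap f a) = funMap f (fun i => h (a i)))
    (t : 𝓛.Term X) (u : X → M) :
    t.realize (h ∘ u) = h (t.realize u) := by
  induction t with
  | var x => rfl
  | func f ts ih => simp only [Term.realize, hhom, ih]

theorem stmt14_general {L : Type*} [CompleteResiduatedLattice L]
    (𝓛 : Language) (X : Type*) (M N : Type*) [𝓛.Structure M] [𝓛.Structure N]
    (leM : M → M → L) (leN : N → N → L)
    (h : M → N) (hsurj : Function.Surjective h)
    (hhom : ∀ (n : ℕ) (f : 𝓛.Functions n) (a : Fin n → M),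
      h (funMap f a) = funMap f (fun i => h (a i)))
    (hmono : ∀ a b : M, leM a b ≤ leN (h a) (h b))
    (Sg : 𝓛.Term X → 𝓛.Term X → L)
    (hmod : ∀ t t' : 𝓛.Term X,
      Sg t t' ≤ ⨅ v : X → M, leM (t.realize v) (t'.realize v)) :
    ∀ t t' : 𝓛.Term X,
      Sg t t' ≤ ⨅ v : X → N, leN (t.realize v) (t'.realize v) := by
  intro t t'
  refine le_iInf fun v => ?_
  obtain ⟨u, rfl⟩ := hsurj.comp_left v
  calc Sg t t' ≤ leM (t.realize u) (t'.realize u) := (hmod t t').trans (iInf_le _ u)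
    _ ≤ leN (h (t.realize u)) (h (t'.realize u)) := hmono _ _
    _ = leN (t.realize (h ∘ u)) (t'.realize (h ∘ u)) := by
      rw [Term.realize_comp_of_map_funMap hhom, Term.realize_comp_of_map_funMap hhom]

/-- Surjective homomorphic images of models of an L-set of inequalities `Σ`
are models of `Σ`. -/
theorem stmt14 {L : Type*} [CompleteResiduatedLattice L]
    (𝓛 : Language) (X : Type*) (M N : Type*) [𝓛.Structure M] [𝓛.Structure N]
    (leM : M → M → L) (leN : N → N → L)
    (hreflM : ∀ a : M, leM a a = ⊤)
    (htransM : ∀ a b c : M, leM a b ⊛ leM b c ≤ leM a c)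
    (hcompM : ∀ (n : ℕ) (f : 𝓛.Functions n) (a b : Fin n → M),
      bigMul (fun i => leM (a i) (b i)) ≤ leM (funMap f a) (funMap f b))
    (hsepM : ∀ a b : M, a ≠ b → leM a b ≠ ⊤ ∨ leM b a ≠ ⊤)
    (hreflN : ∀ a : N, leN a a = ⊤)
    (htransN : ∀ a b c : N, leN a b ⊛ leN b c ≤ leN a c)
    (hcompN : ∀ (n : ℕ) (f : 𝓛.Functions n) (a b : Fin n → N),
      bigMul (fun i => leN (a i) (b i)) ≤ leN (funMap f a) (funMap f b))
    (hsepN : ∀ a b : N, a ≠ b → leN a b ≠ ⊤ ∨ leN b a ≠ ⊤)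
    (h : M → N) (hsurj : Function.Surjective h)
    (hhom : ∀ (n : ℕ) (f : 𝓛.Functions n) (a : Fin n → M),
      h (funMap f a) = funMap f (fun i => h (a i)))
    (hmono : ∀ a b : M, leM a b ≤ leN (h a) (h b))
    (Sg : 𝓛.Term X → 𝓛.Term X → L)
    (hmod : ∀ t t' : 𝓛.Term X,
      Sg t t' ≤ ⨅ v : X → M, leM (t.realize v) (t'.realize v)) :
    ∀ t t' : 𝓛.Term X,
      Sg t t' ≤ ⨅ v : X → N, leN (t.realize v) (t'.realize v) :=
  stmt14_general 𝓛 X M N leM leN h hsurj hhom hmono Sg hmod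
end

section
/- Let L be a complete residuated lattice, 𝓛 a first-order language of function symbols, X a set of variables, and Σ an L-set of inequalities, i.e., a map assigning a degree Σ(t ≼ t') ∈ L to each pair of 𝓛-terms t,t' in variables X. Let (M_i)_{i∈I} be a family of algebras with L-order, each a model of Σ (Σ(t ≼ t') ≤ ⨅_{v : X → M_i} (t.realize v ≼^{M_i} t'.realize v) for all terms t,t' and all i). Equip the product P = ∏_{i∈I} M_i with the componentwise 𝓛-structure (f^P(a₁,…,aₙ)(i) = f^{M_i}(a₁(i),…,aₙ(i))) and the L-relation a ≼^P b = ⨅_{i∈I} (a(i) ≼^{M_i} b(i)). Then P is a model of Σ: Σ(t ≼ t') ≤ ⨅_{v : X → P} (t.realize v ≼^P t'.realize v) for all terms t,t'. -/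
open FirstOrder FirstOrder.Language FirstOrder.Language.Structure

open CompleteResiduatedLattice

local infixr:70 " ⊛ " => CompleteResiduatedLattice.otimes

/-- The componentwise structure on a direct product of `𝓛`-structures. -/
instance piStructure {𝓛 : Language} {I : Type*} {M : I → Type*}
    [∀ i, 𝓛.Structure (M i)] : 𝓛.Structure (∀ i, M i) where
  funMap f a := fun i => funMap f (fun k => a k i)
  RelMap r a := ∀ i, RelMap r (fun k => a k i)

theorem FirstOrder.Language.Term.realize_pi_apply {𝓛 : Language} {X I : Type*}
    {M : I → Type*} [∀ i, 𝓛.Structure (M i)] (t : 𝓛.Term X) (v : X → ∀ i, M i) (i : I) :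
    t.realize v i = t.realize fun x => v x i := by
  induction t with
  | var x => rfl
  | func f ts ih => exact congrArg (funMap f) (funext ih)

theorem stmt15_general {L : Type*} [CompleteResiduatedLattice L]
    (𝓛 : Language) (X : Type*) (I : Type*) (M : I → Type*)
    [∀ i, 𝓛.Structure (M i)]
    (le : ∀ i, M i → M i → L)
    (Sg : 𝓛.Term X → 𝓛.Term X → L)
    (hmod : ∀ i, ∀ t t' : 𝓛.Term X,
      Sg t t' ≤ ⨅ v : X → M i, le i (t.realize v) (t'.realize v)) :
    ∀ t t' : 𝓛.Term X,
      Sg t t' ≤ ⨅ v : X → (∀ i, M i), ⨅ i, le i (t.realize v i) (t'.realize v i) := by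
  intro t t'
  refine le_iInf fun v => le_iInf fun i => ?_
  simpa only [Term.realize_pi_apply] using (hmod i t t').trans (iInf_le _ fun x => v x i)

/-- Direct products of models of an L-set of inequalities `Σ` are models
of `Σ`, where the product carries the componentwise operations and the
L-order `a ≼ b = ⨅ i, a(i) ≼^{M_i} b(i)`. -/
theorem stmt15 {L : Type*} [CompleteResiduatedLattice L]
    (𝓛 : Language) (X : Type*) (I : Type*) (M : I → Type*)
    [∀ i, 𝓛.Structure (M i)]
    (le : ∀ i, M i → M i → L)
    (hrefl : ∀ i, ∀ a : M i, le i a a = ⊤)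
    (htrans : ∀ i, ∀ a b c : M i, le i a b ⊛ le i b c ≤ le i a c)
    (hcomp : ∀ i, ∀ (n : ℕ) (f : 𝓛.Functions n) (a b : Fin n → M i),
      bigMul (fun k => le i (a k) (b k)) ≤ le i (funMap f a) (funMap f b))
    (hsep : ∀ i, ∀ a b : M i, a ≠ b → le i a b ≠ ⊤ ∨ le i b a ≠ ⊤)
    (Sg : 𝓛.Term X → 𝓛.Term X → L)
    (hmod : ∀ i, ∀ t t' : 𝓛.Term X,
      Sg t t' ≤ ⨅ v : X → M i, le i (t.realize v) (t'.realize v)) :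
    ∀ t t' : 𝓛.Term X,
      Sg t t' ≤ ⨅ v : X → (∀ i, M i), ⨅ i, le i (t.realize v i) (t'.realize v i) :=
  stmt15_general 𝓛 X I M le Sg hmod
end

section
/- Let L be a complete residuated lattice, 𝓛 a first-order language of function symbols, and let M, N be algebras with L-order (𝓛-structures with reflexive, ⊗-transitive, function-compatible, separated binary L-relations ≼^M, ≼^N). Let h : M → N be a homomorphism (commuting with all function symbols and a ≼^M b ≤ h(a) ≼^N h(b)), and let Q be a compatible L-preorder on M such that Q(a,b) ≤ h(a) ≼^N h(b) for all a,b ∈ M. Consider the factor algebra M/Q (quotient by a ∼ b iff Q(a,b) = Q(b,a) = 1, functions induced componentwise, [a] ≼^{M/Q} [b] = Q(a,b)) and the natural map ν : M → M/Q, ν(a) = [a]. Then there exists a unique map g : M/Q → N with h = g ∘ ν, and this g is a homomorphism of algebras with L-order: it commutes with the interpretations of all function symbols and satisfies [a] ≼^{M/Q} [b] ≤ g([a]) ≼^N g([b]) for all a,b ∈ M. -/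
open FirstOrder FirstOrder.Language FirstOrder.Language.Structure

open CompleteResiduatedLattice

local infixr:70 " ⊛ " => CompleteResiduatedLattice.otimes

theorem eq_of_rel_eq_top_of_separated {N L : Type*} [Top L] {le : N → N → L}
    (hsep : ∀ a b : N, a ≠ b → le a b ≠ ⊤ ∨ le b a ≠ ⊤) {x y : N}
    (hxy : le x y = ⊤) (hyx : le y x = ⊤) : x = y := by
  by_contra hne
  rcases hsep x y hne with h | h
  exacts [h hxy, h hyx]

theorem stmt17_general {L : Type*} [CompleteResiduatedLattice L]
    (𝓛 : Language) (M N : Type*) [𝓛.Structure M] [𝓛.Structure N]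
    (leN : N → N → L)
    (hsepN : ∀ a b : N, a ≠ b → leN a b ≠ ⊤ ∨ leN b a ≠ ⊤)
    (h : M → N)
    (hhom : ∀ (n : ℕ) (f : 𝓛.Functions n) (a : Fin n → M),
      h (funMap f a) = funMap f (fun i => h (a i)))
    (Q : M → M → L)
    (hQh : ∀ a b : M, Q a b ≤ leN (h a) (h b)) :
    let r : M → M → Prop := fun a b => Q a b = ⊤ ∧ Q b a = ⊤
    ∃ g : Quot r → N,
      (∀ a : M, g (Quot.mk r a) = h a) ∧
      (∀ g' : Quot r → N, (∀ a : M, g' (Quot.mk r a) = h a) → g' = g) ∧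
      (∀ (n : ℕ) (f : 𝓛.Functions n) (a : Fin n → M),
        g (Quot.mk r (funMap f a)) = funMap f (fun i => g (Quot.mk r (a i)))) ∧
      (∀ a b : M, Q a b ≤ leN (g (Quot.mk r a)) (g (Quot.mk r b))) := by
  intro r
  have h_respects : ∀ a b : M, r a b → h a = h b := fun a b ⟨hab, hba⟩ =>
    eq_of_rel_eq_top_of_separated hsepN
      (top_le_iff.mp (hab ▸ hQh a b)) (top_le_iff.mp (hba ▸ hQh b a))
  refine ⟨Quot.lift h h_respects, fun _ => rfl, ?_, hhom, hQh⟩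
  intro g' hg'
  funext x
  induction x using Quot.ind with
  | mk a => exact hg' a

/-- If `Q` is a compatible L-preorder on `M` lying below the L-preorder
induced by a homomorphism `h : M → N`, then `h` factors uniquely through the
natural map `ν : M → M/Q`, and the factorizing map is a homomorphism of
algebras with L-order. -/
theorem stmt17 {L : Type*} [CompleteResiduatedLattice L]
    (𝓛 : Language) (M N : Type*) [𝓛.Structure M] [𝓛.Structure N]
    (leM : M → M → L) (leN : N → N → L)
    (hreflM : ∀ a : M, leM a a = ⊤)
    (htransM : ∀ a b c : M, leM a b ⊛ leM b c ≤ leM a c)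
    (hcompM : ∀ (n : ℕ) (f : 𝓛.Functions n) (a b : Fin n → M),
      bigMul (fun i => leM (a i) (b i)) ≤ leM (funMap f a) (funMap f b))
    (hsepM : ∀ a b : M, a ≠ b → leM a b ≠ ⊤ ∨ leM b a ≠ ⊤)
    (hreflN : ∀ a : N, leN a a = ⊤)
    (htransN : ∀ a b c : N, leN a b ⊛ leN b c ≤ leN a c)
    (hcompN : ∀ (n : ℕ) (f : 𝓛.Functions n) (a b : Fin n → N),
      bigMul (fun i => leN (a i) (b i)) ≤ leN (funMap f a) (funMap f b))
    (hsepN : ∀ a b : N, a ≠ b → leN a b ≠ ⊤ ∨ leN b a ≠ ⊤)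
    (h : M → N)
    (hhom : ∀ (n : ℕ) (f : 𝓛.Functions n) (a : Fin n → M),
      h (funMap f a) = funMap f (fun i => h (a i)))
    (hmono : ∀ a b : M, leM a b ≤ leN (h a) (h b))
    (Q : M → M → L)
    (hQle : ∀ a b : M, leM a b ≤ Q a b)
    (hQtrans : ∀ a b c : M, Q a b ⊛ Q b c ≤ Q a c)
    (hQcomp : ∀ (n : ℕ) (f : 𝓛.Functions n) (a b : Fin n → M),
      bigMul (fun i => Q (a i) (b i)) ≤ Q (funMap f a) (funMap f b))
    (hQh : ∀ a b : M, Q a b ≤ leN (h a) (h b)) :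
    let r : M → M → Prop := fun a b => Q a b = ⊤ ∧ Q b a = ⊤
    ∃ g : Quot r → N,
      (∀ a : M, g (Quot.mk r a) = h a) ∧
      (∀ g' : Quot r → N, (∀ a : M, g' (Quot.mk r a) = h a) → g' = g) ∧
      (∀ (n : ℕ) (f : 𝓛.Functions n) (a : Fin n → M),
        g (Quot.mk r (funMap f a)) = funMap f (fun i => g (Quot.mk r (a i)))) ∧
      (∀ a b : M, Q a b ≤ leN (g (Quot.mk r a)) (g (Quot.mk r b))) :=
  stmt17_general 𝓛 M N leN hsepN h hhom Q hQh
end
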